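/- arXiv:2007.05840 — 2 statements merged into one kernel-verified Lean document; each statement's English description precedes it below -/
import Mathlib

section
/- Let x_1,…,x_n and y_1,…,y_m be points in ℝ^d and let k ≤ d. Define C_k² = sup over U ∈ S(d,k) of the infimum over couplings π ∈ Π of ∑_{i,j} π_{ij} ‖UUᵀx_i − y_j‖², and S_k² = infimum over couplings π ∈ Π of the supremum over U ∈ S(d,k) of ∑_{i,j} π_{ij} ‖UUᵀx_i − UUᵀy_j‖². Then C_k² ≤ S_k² + sup over U ∈ S(d,k) of (1/m) ∑_{j=1}^m ‖(I_d − UUᵀ) y_j‖². -/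
open Matrix Finset

/-- The Euclidean (ℓ2) norm of a vector in `ℝ^d`. -/
noncomputable def eucNormSq_enorm_port {d : ℕ} (v : Fin d → ℝ) : ℝ := Real.sqrt (∑ i, v i ^ 2)

/-- A coupling between the uniform empirical measures on `n` positives and `m` negatives. -/
def IsCoupling {n m : ℕ} (π : Matrix (Fin n) (Fin m) ℝ) : Prop :=
  (∀ i j, 0 ≤ π i j) ∧ (∀ i, ∑ j, π i j = 1 / (n : ℝ)) ∧ (∀ j, ∑ i, π i j = 1 / (m : ℝ))

/-!
For a fixed `U` put `P = UUᵀ`, an orthogonal projection. Since `Px - Py` lies in the range of `P`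
and `(I - P)y` in its orthogonal complement, Pythagoras gives
`‖Px - y‖² = ‖Px - Py‖² + ‖(I - P)y‖²`, and because the column sums of a coupling are `1/m` the
second term integrates to `(1/m) ∑ⱼ ‖(I - P)yⱼ‖²` whatever the coupling. So the cost of any
coupling `π` at `U` is at most `sup_U (projected cost of π) + sup_U (residual)`; taking the infimum
over `π` on the left, then the supremum over `U`, and the infimum over `π` on the right gives the
claim.
-/

lemma eucNormSq_enorm_port_sq {d : ℕ} (v : Fin d → ℝ) : eucNormSq_enorm_port v ^ 2 = v ⬝ᵥ v := by
  rw [eucNormSq_enorm_port, Real.sq_sqrt (Finset.sum_nonneg fun i _ => sq_nonneg (v i))]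
  exact Finset.sum_congr rfl fun i _ => sq (v i)

namespace Matrix

variable {ι κ R : Type*} [Fintype ι]

lemma add_dotProduct_add_self_of_dotProduct_eq_zero [CommRing R] {a b : ι → R}
    (hab : a ⬝ᵥ b = 0) : (a + b) ⬝ᵥ (a + b) = a ⬝ᵥ a + b ⬝ᵥ b := by
  rw [add_dotProduct, dotProduct_add, dotProduct_add, dotProduct_comm b a, hab]
  ring

lemma isStarProjection_mul_transpose [Fintype κ] [DecidableEq κ] [CommRing R] [StarRing R]
    [TrivialStar R] {U : Matrix ι κ R} (hU : Uᵀ * U = 1) : IsStarProjection (U * Uᵀ) where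
  isIdempotentElem := by
    rw [IsIdempotentElem, Matrix.mul_assoc, ← Matrix.mul_assoc Uᵀ, hU, Matrix.one_mul]
  isSelfAdjoint := by
    rw [IsSelfAdjoint, star_eq_conjTranspose, conjTranspose_eq_transpose_of_trivial,
      transpose_mul, transpose_transpose]

end Matrix

lemma exists_transpose_mul_self_eq_one {d k : ℕ} (hkd : k ≤ d) :
    ∃ U : Matrix (Fin d) (Fin k) ℝ, Uᵀ * U = 1 := by
  refine ⟨Matrix.of fun i j => if i = Fin.castLE hkd j then 1 else 0, ?_⟩
  ext a b
  simp [Matrix.mul_apply, Matrix.one_apply, Fin.castLE_inj, eq_comm]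

namespace IsStarProjection

variable {ι R : Type*} [Fintype ι] [DecidableEq ι] [CommRing R] [StarRing R] [TrivialStar R]
  {P : Matrix ι ι R}

lemma mulVec_dotProduct_one_sub_mulVec (hP : IsStarProjection P) (u w : ι → R) :
    (P *ᵥ u) ⬝ᵥ ((1 - P) *ᵥ w) = 0 := by
  have hPt : Pᵀ = P := by
    rw [← conjTranspose_eq_transpose_of_trivial, ← star_eq_conjTranspose]
    exact hP.isSelfAdjoint
  rw [dotProduct_comm, dotProduct_mulVec, ← mulVec_transpose, hPt, mulVec_mulVec,
    hP.mul_one_sub_self, zero_mulVec, zero_dotProduct]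

lemma dotProduct_self_eq_add (hP : IsStarProjection P) (v : ι → R) :
    v ⬝ᵥ v = (P *ᵥ v) ⬝ᵥ (P *ᵥ v) + ((1 - P) *ᵥ v) ⬝ᵥ ((1 - P) *ᵥ v) := by
  rw [← add_dotProduct_add_self_of_dotProduct_eq_zero (hP.mulVec_dotProduct_one_sub_mulVec v v),
    ← add_mulVec, add_sub_cancel, one_mulVec]

lemma sub_dotProduct_sub_eq_add (hP : IsStarProjection P) (u w : ι → R) :
    (P *ᵥ u - w) ⬝ᵥ (P *ᵥ u - w) =
      (P *ᵥ u - P *ᵥ w) ⬝ᵥ (P *ᵥ u - P *ᵥ w) + ((1 - P) *ᵥ w) ⬝ᵥ ((1 - P) *ᵥ w) := by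
  have horth : (P *ᵥ u - P *ᵥ w) ⬝ᵥ -((1 - P) *ᵥ w) = 0 := by
    rw [← mulVec_sub, dotProduct_neg, hP.mulVec_dotProduct_one_sub_mulVec, neg_zero]
  have hsplit : P *ᵥ u - w = (P *ᵥ u - P *ᵥ w) + -((1 - P) *ᵥ w) := by
    rw [sub_mulVec, one_mulVec]
    abel
  rw [hsplit, add_dotProduct_add_self_of_dotProduct_eq_zero horth, neg_dotProduct_neg]

lemma mulVec_dotProduct_self_le {P : Matrix ι ι ℝ} (hP : IsStarProjection P) (v : ι → ℝ) :
    (P *ᵥ v) ⬝ᵥ (P *ᵥ v) ≤ v ⬝ᵥ v := by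
  rw [hP.dotProduct_self_eq_add v]
  exact le_add_of_nonneg_right (Finset.sum_nonneg fun i _ => mul_self_nonneg _)

end IsStarProjection

lemma exists_isCoupling {n m : ℕ} (hn : 0 < n) (hm : 0 < m) :
    ∃ π : Matrix (Fin n) (Fin m) ℝ, IsCoupling π := by
  have hn' : (n : ℝ) ≠ 0 := by positivity
  have hm' : (m : ℝ) ≠ 0 := by positivity
  refine ⟨Matrix.of fun _ _ => 1 / ((n : ℝ) * m), fun _ _ => ?_, fun _ => ?_, fun _ => ?_⟩
  · simp only [of_apply]
    positivity
  all_goals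
    simp only [of_apply, sum_const, card_univ, Fintype.card_fin, nsmul_eq_mul]
    field_simp

lemma IsCoupling.sum_sum_mul_eq_one_div_mul_sum {n m : ℕ} {π : Matrix (Fin n) (Fin m) ℝ}
    (hπ : IsCoupling π) (c : Fin m → ℝ) :
    ∑ i, ∑ j, π i j * c j = 1 / (m : ℝ) * ∑ j, c j := by
  rw [Finset.sum_comm, Finset.mul_sum]
  exact Finset.sum_congr rfl fun j _ => by rw [← Finset.sum_mul, hπ.2.2 j]

lemma sSup_sInf_le_sInf_sSup_add_sSup {α β : Type*} {p : α → Prop} {q : β → Prop}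
    (F G : α → β → ℝ) (H : α → ℝ) (hp : ∃ a, p a) (hq : ∃ b, q b)
    (hFGH : ∀ a b, p a → q b → F a b ≤ G a b + H a)
    (hF : ∀ a, p a → BddBelow {t | ∃ b, q b ∧ t = F a b})
    (hG : ∀ b, q b → BddAbove {s | ∃ a, p a ∧ s = G a b})
    (hH : BddAbove {s | ∃ a, p a ∧ s = H a}) :
    sSup {s | ∃ a, p a ∧ s = sInf {t | ∃ b, q b ∧ t = F a b}} ≤
      sInf {t | ∃ b, q b ∧ t = sSup {s | ∃ a, p a ∧ s = G a b}} +
        sSup {s | ∃ a, p a ∧ s = H a} := by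
  obtain ⟨a₀, ha₀⟩ := hp
  obtain ⟨b₀, hb₀⟩ := hq
  refine csSup_le ⟨_, a₀, ha₀, rfl⟩ ?_
  rintro _ ⟨a, ha, rfl⟩
  rw [← sub_le_iff_le_add]
  refine le_csInf ⟨_, b₀, hb₀, rfl⟩ ?_
  rintro _ ⟨b, hb, rfl⟩
  calc sInf {t | ∃ b, q b ∧ t = F a b} - sSup {s | ∃ a, p a ∧ s = H a}
      ≤ F a b - H a := sub_le_sub (csInf_le (hF a ha) ⟨b, hb, rfl⟩) (le_csSup hH ⟨a, ha, rfl⟩)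
    _ ≤ G a b := sub_le_iff_le_add.mpr (hFGH a b ha hb)
    _ ≤ sSup {s | ∃ a, p a ∧ s = G a b} := le_csSup (hG b hb) ⟨a, ha, rfl⟩

/-- `C_k² ≤ S_k² + sup_{U ∈ S(d,k)} (1/m) ∑_j ‖(I_d − UUᵀ) y_j‖²`. -/
theorem stmt3 (d k n m : ℕ) (hkd : k ≤ d) (hn : 0 < n) (hm : 0 < m)
    (x : Fin n → Fin d → ℝ) (y : Fin m → Fin d → ℝ) :
    sSup {s : ℝ | ∃ U : Matrix (Fin d) (Fin k) ℝ, Uᵀ * U = 1 ∧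
        s = sInf {t : ℝ | ∃ π : Matrix (Fin n) (Fin m) ℝ, IsCoupling π ∧
          t = ∑ i, ∑ j, π i j * eucNormSq_enorm_port ((U * Uᵀ).mulVec (x i) - y j) ^ 2}} ≤
    sInf {t : ℝ | ∃ π : Matrix (Fin n) (Fin m) ℝ, IsCoupling π ∧
        t = sSup {s : ℝ | ∃ U : Matrix (Fin d) (Fin k) ℝ, Uᵀ * U = 1 ∧
          s = ∑ i, ∑ j, π i j *
                eucNormSq_enorm_port ((U * Uᵀ).mulVec (x i) - (U * Uᵀ).mulVec (y j)) ^ 2}} +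
    sSup {s : ℝ | ∃ U : Matrix (Fin d) (Fin k) ℝ, Uᵀ * U = 1 ∧
        s = (1 / (m : ℝ)) * ∑ j, eucNormSq_enorm_port ((1 - U * Uᵀ).mulVec (y j)) ^ 2} := by
  refine sSup_sInf_le_sInf_sSup_add_sSup _ _ _ (exists_transpose_mul_self_eq_one hkd)
    (exists_isCoupling hn hm) ?split ?costBddBelow ?projCostBddAbove ?residualBddAbove
  case split =>
    refine fun U π hU hπ => le_of_eq ?_
    rw [← hπ.sum_sum_mul_eq_one_div_mul_sum, ← Finset.sum_add_distrib]
    refine Finset.sum_congr rfl fun i _ => ?_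
    rw [← Finset.sum_add_distrib]
    refine Finset.sum_congr rfl fun j _ => ?_
    simp only [eucNormSq_enorm_port_sq]
    rw [← mul_add, (isStarProjection_mul_transpose hU).sub_dotProduct_sub_eq_add]
  case costBddBelow =>
    refine fun U _ => ⟨0, ?_⟩
    rintro _ ⟨π, hπ, rfl⟩
    exact Finset.sum_nonneg fun i _ => Finset.sum_nonneg fun j _ =>
      mul_nonneg (hπ.1 i j) (sq_nonneg _)
  case projCostBddAbove =>
    refine fun π hπ => ⟨∑ i, ∑ j, π i j * ((x i - y j) ⬝ᵥ (x i - y j)), ?_⟩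
    rintro _ ⟨U, hU, rfl⟩
    gcongr with i _ j _
    · exact hπ.1 i j
    rw [eucNormSq_enorm_port_sq, ← mulVec_sub]
    exact (isStarProjection_mul_transpose hU).mulVec_dotProduct_self_le _
  case residualBddAbove =>
    refine ⟨1 / (m : ℝ) * ∑ j, y j ⬝ᵥ y j, ?_⟩
    rintro _ ⟨U, hU, rfl⟩
    gcongr with j _
    rw [eucNormSq_enorm_port_sq]
    exact (isStarProjection_mul_transpose hU).one_sub.mulVec_dotProduct_self_le _
end

section
/- Let x_1,…,x_n and y_1,…,y_m be points in ℝ^d, let k ≤ d, and fix U ∈ S(d,k). Then the infimum over couplings π ∈ Π of ∑_{i,j} π_{ij} ‖UUᵀx_i − y_j‖² equals (infimum over couplings π ∈ Π of ∑_{i,j} π_{ij} ‖UUᵀx_i − UUᵀy_j‖²) + (1/m) ∑_{j=1}^m ‖(I_d − UUᵀ) y_j‖². -/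
/-! `P = UUᵀ` is an orthogonal projection, so `‖Px - y‖² = ‖Px - Py‖² + ‖(1 - P)y‖²`. The second
term depends only on `j`, hence every coupling pays for it exactly its average under the second
marginal, `(1/m) ∑ⱼ ‖(1 - P)yⱼ‖²`: the two transport objectives differ by a constant on all
couplings, and so do their infima. -/

open Matrix Finset

/-- The Euclidean (ℓ2) norm of a vector in `ℝ^d`. -/
noncomputable def enorm' {d : ℕ} (v : Fin d → ℝ) : ℝ := Real.sqrt (∑ i, v i ^ 2)

noncomputable def otCost {n m : ℕ} (c : Fin n → Fin m → ℝ) : ℝ :=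
  sInf {t : ℝ | ∃ π : Matrix (Fin n) (Fin m) ℝ, IsCoupling π ∧ t = ∑ i, ∑ j, π i j * c i j}

lemma Matrix.transpose_mul_transpose_self {ι κ R : Type*} [Fintype κ] [CommSemiring R]
    (U : Matrix ι κ R) : (U * Uᵀ)ᵀ = U * Uᵀ := by
  rw [transpose_mul, transpose_transpose]

lemma Matrix.isIdempotentElem_mul_transpose {ι κ R : Type*} [Fintype ι] [Fintype κ]
    [DecidableEq κ] [Semiring R] {U : Matrix ι κ R} (hU : Uᵀ * U = 1) :
    IsIdempotentElem (U * Uᵀ) := by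
  rw [IsIdempotentElem, Matrix.mul_assoc, ← Matrix.mul_assoc Uᵀ, hU, Matrix.one_mul]

lemma Matrix.dotProduct_mulVec_one_sub_mulVec {ι R : Type*} [Fintype ι] [DecidableEq ι]
    [CommRing R] {P : Matrix ι ι R} (hPt : Pᵀ = P) (hP : IsIdempotentElem P) (a b : ι → R) :
    (P *ᵥ a) ⬝ᵥ ((1 - P) *ᵥ b) = 0 := by
  have hcompl : P * (1 - P) = 0 := by rw [Matrix.mul_sub, Matrix.mul_one, hP.eq, sub_self]
  rw [dotProduct_mulVec, ← vecMul_transpose, vecMul_vecMul, hPt, hcompl, vecMul_zero,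
    zero_dotProduct]

lemma enorm'_sq {d : ℕ} (v : Fin d → ℝ) : enorm' v ^ 2 = v ⬝ᵥ v := by
  rw [enorm', Real.sq_sqrt (sum_nonneg fun _ _ => sq_nonneg _)]
  simp only [dotProduct, sq]

lemma enorm'_sub_sq_of_dotProduct_eq_zero {d : ℕ} {v w : Fin d → ℝ} (h : v ⬝ᵥ w = 0) :
    enorm' (v - w) ^ 2 = enorm' v ^ 2 + enorm' w ^ 2 := by
  simp only [enorm'_sq, sub_dotProduct, dotProduct_sub, dotProduct_comm w v, h]
  ring

/-- Pythagoras for the orthogonal splitting `b = P b + (1 - P) b`. -/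
lemma enorm'_mulVec_sub_sq {d : ℕ} {P : Matrix (Fin d) (Fin d) ℝ} (hPt : Pᵀ = P)
    (hP : IsIdempotentElem P) (a b : Fin d → ℝ) :
    enorm' (P *ᵥ a - b) ^ 2 = enorm' (P *ᵥ a - P *ᵥ b) ^ 2 + enorm' ((1 - P) *ᵥ b) ^ 2 := by
  have hsplit : P *ᵥ a - b = P *ᵥ (a - b) - (1 - P) *ᵥ b := by
    rw [mulVec_sub, sub_mulVec, one_mulVec]
    abel
  rw [hsplit, enorm'_sub_sq_of_dotProduct_eq_zero (dotProduct_mulVec_one_sub_mulVec hPt hP _ _),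
    mulVec_sub]

section Coupling

variable {n m : ℕ}

lemma isCoupling_uniform (hn : 0 < n) (hm : 0 < m) :
    IsCoupling (fun (_ : Fin n) (_ : Fin m) => 1 / ((n : ℝ) * m)) := by
  have hn' : (n : ℝ) ≠ 0 := by positivity
  have hm' : (m : ℝ) ≠ 0 := by positivity
  refine ⟨fun _ _ => by positivity, fun _ => ?_, fun _ => ?_⟩ <;>
  · simp only [sum_const, card_univ, Fintype.card_fin, nsmul_eq_mul]
    field_simp

lemma IsCoupling.sum_mul_add_right {π : Matrix (Fin n) (Fin m) ℝ} (hπ : IsCoupling π)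
    (c : Fin n → Fin m → ℝ) (g : Fin m → ℝ) :
    ∑ i, ∑ j, π i j * (c i j + g j) = ∑ i, ∑ j, π i j * c i j + 1 / (m : ℝ) * ∑ j, g j := by
  simp only [mul_add, sum_add_distrib]
  rw [sum_comm (f := fun i j => π i j * g j), mul_sum]
  simp only [← sum_mul, hπ.2.2]

lemma otCost_add_right (hn : 0 < n) (hm : 0 < m) {c : Fin n → Fin m → ℝ}
    (hc : ∀ i j, 0 ≤ c i j) (g : Fin m → ℝ) :
    otCost (fun i j => c i j + g j) = otCost c + 1 / (m : ℝ) * ∑ j, g j := by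
  set C := 1 / (m : ℝ) * ∑ j, g j
  set B := {t : ℝ | ∃ π : Matrix (Fin n) (Fin m) ℝ, IsCoupling π ∧ t = ∑ i, ∑ j, π i j * c i j}
  have himage : {t : ℝ | ∃ π : Matrix (Fin n) (Fin m) ℝ, IsCoupling π ∧
      t = ∑ i, ∑ j, π i j * (c i j + g j)} = OrderIso.addRight C '' B := by
    ext t
    constructor
    · rintro ⟨π, hπ, rfl⟩
      exact ⟨_, ⟨π, hπ, rfl⟩, (hπ.sum_mul_add_right c g).symm⟩
    · rintro ⟨_, ⟨π, hπ, rfl⟩, rfl⟩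
      exact ⟨π, hπ, (hπ.sum_mul_add_right c g).symm⟩
  have hne : B.Nonempty := ⟨_, _, isCoupling_uniform hn hm, rfl⟩
  have hbdd : BddBelow B := by
    refine ⟨0, ?_⟩
    rintro _ ⟨π, hπ, rfl⟩
    exact sum_nonneg fun i _ => sum_nonneg fun j _ => mul_nonneg (hπ.1 i j) (hc i j)
  rw [otCost, himage, ← (OrderIso.addRight C).map_csInf' hne hbdd]
  rfl

end Coupling

theorem stmt9_general (d k n m : ℕ) (hn : 0 < n) (hm : 0 < m)
    (x : Fin n → Fin d → ℝ) (y : Fin m → Fin d → ℝ)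
    (U : Matrix (Fin d) (Fin k) ℝ) (hU : Uᵀ * U = 1) :
    sInf {t : ℝ | ∃ π : Matrix (Fin n) (Fin m) ℝ, IsCoupling π ∧
        t = ∑ i, ∑ j, π i j * enorm' ((U * Uᵀ).mulVec (x i) - y j) ^ 2} =
      sInf {t : ℝ | ∃ π : Matrix (Fin n) (Fin m) ℝ, IsCoupling π ∧
          t = ∑ i, ∑ j, π i j *
                enorm' ((U * Uᵀ).mulVec (x i) - (U * Uᵀ).mulVec (y j)) ^ 2} +
        (1 / (m : ℝ)) * ∑ j, enorm' ((1 - U * Uᵀ).mulVec (y j)) ^ 2 := by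
  change otCost _ = otCost _ + _
  rw [← otCost_add_right hn hm (fun _ _ => sq_nonneg _)]
  congr 1
  funext i j
  exact enorm'_mulVec_sub_sq (transpose_mul_transpose_self U) (isIdempotentElem_mul_transpose hU)
    (x i) (y j)

/-- for a fixed `U ∈ S(d,k)`,
`inf_π ∑_{i,j} π_{ij} ‖UUᵀx_i − y_j‖² = (inf_π ∑_{i,j} π_{ij} ‖UUᵀx_i − UUᵀy_j‖²)
 + (1/m) ∑_j ‖(I_d − UUᵀ) y_j‖²`. -/
theorem stmt9 (d k n m : ℕ) (hkd : k ≤ d) (hn : 0 < n) (hm : 0 < m)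
    (x : Fin n → Fin d → ℝ) (y : Fin m → Fin d → ℝ)
    (U : Matrix (Fin d) (Fin k) ℝ) (hU : Uᵀ * U = 1) :
    sInf {t : ℝ | ∃ π : Matrix (Fin n) (Fin m) ℝ, IsCoupling π ∧
        t = ∑ i, ∑ j, π i j * enorm' ((U * Uᵀ).mulVec (x i) - y j) ^ 2} =
      sInf {t : ℝ | ∃ π : Matrix (Fin n) (Fin m) ℝ, IsCoupling π ∧
          t = ∑ i, ∑ j, π i j *
                enorm' ((U * Uᵀ).mulVec (x i) - (U * Uᵀ).mulVec (y j)) ^ 2} +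
        (1 / (m : ℝ)) * ∑ j, enorm' ((1 - U * Uᵀ).mulVec (y j)) ^ 2 :=
  stmt9_general d k n m hn hm x y U hU
end
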